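/- (Relation between He^ε and tHe^ε.) For every ε ∈ [0,1), tHe^ε(X|Y) − 1 ≤ He^ε(X|Y) ≤ (1/(1−ε))·tHe^ε(X|Y). More precisely, for every subset A ⊆ 𝒳×𝒴 with P_{XY}(A) ≥ 1−ε one has Σ_{(x,y)∈A} P_{XY}(x,y) log(1/P_{X|Y}(x|y)) − 1 ≤ P_{XY}(A)·H_A(X|Y) ≤ (1/P_{XY}(A))·Σ_{(x,y)∈A} P_{XY}(x,y) log(1/P_{X|Y}(x|y)). -/

import Mathlib

/-!
For `(x, y) ∈ A` write `P_A(y) = P(A ∩ {Y = y})`. Then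
`log₂ (1 / P_{X|Y}(x|y)) = log₂ (P_A(y) / P(x,y)) + log₂ (P_Y(y) / P_A(y))`, and
`Q^A_Y(y) / Q^A(x,y) = P_A(y) / P(x,y)`. Weighting by `P(x,y)` and summing over `A`, the first
term gives `P(A) · H_A(X|Y)` and the second a nonnegative loss of at most one bit: fibrewise it is
`P_A(y) log₂ (P_Y(y) / P_A(y)) ≤ P_Y(y)`, because `t log₂ (1 / t) ≤ 1 / (2 ln 2) ≤ 1`. So
`P(A) H_A ≤ Σ_A P log₂ (1 / P_{X|Y}) ≤ P(A) H_A + 1`; with `P(A) ≤ 1` and `P(A) ≥ 1 - ε > 0`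
both per-set bounds follow, and the bounds on the infima follow from them.
-/

open Filter Topology

noncomputable section

/-- A joint probability mass function on `X × Y` (all information quantities are base 2),
with everywhere-positive marginals. -/
structure JointPMF (X Y : Type) where
  p : X → Y → ℝ
  nonneg : ∀ x y, 0 ≤ p x y
  hasSum_one : HasSum (fun z : X × Y => p z.1 z.2) 1
  margX_pos : ∀ x, 0 < ∑' y, p x y
  margY_pos : ∀ y, 0 < ∑' x, p x y

namespace JointPMF

variable {X Y : Type}

/-- marginal `P_X` -/
def pX (P : JointPMF X Y) (x : X) : ℝ := ∑' y, P.p x y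

/-- marginal `P_Y` -/
def pY (P : JointPMF X Y) (y : Y) : ℝ := ∑' x, P.p x y

/-- conditional probability `P_{X|Y}(x|y)` -/
def condXY (P : JointPMF X Y) (x : X) (y : Y) : ℝ := P.p x y / P.pY y

/-- conditional probability `P_{Y|X}(y|x)` -/
def condYX (P : JointPMF X Y) (x : X) (y : Y) : ℝ := P.p x y / P.pX x

/-- probability of a set of pairs -/
def prob (P : JointPMF X Y) (A : Set (X × Y)) : ℝ :=
  ∑' z : X × Y, A.indicator (fun z => P.p z.1 z.2) z

/-- probability of a set of `x`'s under the marginal `P_X` -/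
def probX (P : JointPMF X Y) (A : Set X) : ℝ :=
  ∑' x : X, A.indicator (fun x => P.pX x) x

/-- conditional self-information `log₂(1/P_{X|Y}(x|y))` -/
def iXY (P : JointPMF X Y) (x : X) (y : Y) : ℝ := Real.logb 2 (1 / P.condXY x y)

/-- `Q^A(x,y) = P_{XY}(x,y)·1[(x,y)∈A]/P_{XY}(A)` -/
def QA (P : JointPMF X Y) (A : Set (X × Y)) (z : X × Y) : ℝ :=
  A.indicator (fun z => P.p z.1 z.2) z / P.prob A

/-- `Q^A_Y(y) = Σ_x Q^A(x,y)` -/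
def QAY (P : JointPMF X Y) (A : Set (X × Y)) (y : Y) : ℝ := ∑' x, P.QA A (x, y)

/-- `H_A(X|Y) = Σ_{(x,y)∈A} Q^A(x,y) log₂(Q^A_Y(y)/Q^A(x,y))` -/
def HA (P : JointPMF X Y) (A : Set (X × Y)) : ℝ :=
  ∑' z : X × Y, A.indicator (fun z => P.QA A z * Real.logb 2 (P.QAY A z.2 / P.QA A z)) z

/-- `He^ε(X|Y)`: infimum of `P(A)·H_A(X|Y)` over `A` with `P(A) ≥ 1−ε`. -/
def He (P : JointPMF X Y) (ε : ℝ) : ℝ :=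
  sInf {v : ℝ | ∃ A : Set (X × Y), 1 - ε ≤ P.prob A ∧ v = P.prob A * P.HA A}

/-- `Σ_{(x,y)∈A} P_{XY}(x,y) log₂(1/P_{X|Y}(x|y))` -/
def infoSum (P : JointPMF X Y) (A : Set (X × Y)) : ℝ :=
  ∑' z : X × Y, A.indicator (fun z => P.p z.1 z.2 * P.iXY z.1 z.2) z

/-- `tHe^ε(X|Y)` -/
def tHe (P : JointPMF X Y) (ε : ℝ) : ℝ :=
  sInf {v : ℝ | ∃ A : Set (X × Y), 1 - ε ≤ P.prob A ∧ v = P.infoSum A}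

/-- Shannon conditional entropy `H(X|Y)` -/
def condEnt (P : JointPMF X Y) : ℝ :=
  ∑' z : X × Y, P.p z.1 z.2 * P.iXY z.1 z.2

/-- `Pr{ log₂(1/P_{X|Y}(x|Y)) > R | X = x }` -/
def tailProb (P : JointPMF X Y) (x : X) (R : ℝ) : ℝ :=
  ∑' y : Y, {y : Y | R < P.iXY x y}.indicator (fun y => P.condYX x y) y

/-- `h̄^ε(x)` (real-valued version) -/
def hbar (P : JointPMF X Y) (ε : ℝ) (x : X) : ℝ :=
  sInf {R : ℝ | P.tailProb x R ≤ ε}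

/-- `h̄^ε(x)` (extended-real-valued version) -/
def hbarE (P : JointPMF X Y) (ε : ℝ) (x : X) : EReal :=
  sInf {R : EReal | ∃ r : ℝ, R = (r : EReal) ∧ P.tailProb x r ≤ ε}

/-- `H̄_s^ε(X|Y) = Σ_x P_X(x)·h̄^ε(x)` -/
def HsEps (P : JointPMF X Y) (ε : ℝ) : ℝ := ∑' x, P.pX x * P.hbar ε x

end JointPMF

/-- Partial sum `Σ_{i<k} P(e i) log₂(1/P_{X|Y}(e i))` along an enumeration `e`. -/
def hHeSum {X Y : Type} (P : JointPMF X Y) (e : ℕ → X × Y) (k : ℕ) : ℝ :=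
  ∑ i ∈ Finset.range k, P.p (e i).1 (e i).2 * P.iXY (e i).1 (e i).2

/-- A variable-length code with common side-information: for each `y` the set of codewords
`{enc x y : x}` satisfies the prefix condition (no codeword is a proper prefix of another). -/
structure CSICode (X Y : Type) where
  enc : X → Y → List Bool
  dec : List Bool → Y → X
  prefixFree : ∀ (y : Y) (x x' : X), (enc x y) <+: (enc x' y) → enc x y = enc x' y

namespace CSICode

variable {X Y : Type}

/-- error probability `Pr{ψ(φ(X|Y),Y) ≠ X}` -/
def err (C : CSICode X Y) (P : JointPMF X Y) : ℝ :=
  P.prob {z | C.dec (C.enc z.1 z.2) z.2 ≠ z.1}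

/-- average codeword length `E[ℓ(X|Y)]` -/
def avgLen (C : CSICode X Y) (P : JointPMF X Y) : ℝ :=
  ∑' z : X × Y, P.p z.1 z.2 * ((C.enc z.1 z.2).length : ℝ)

end CSICode

/-- A Slepian-Wolf code: prefix-free encoder of `x` alone, decoder with side information. -/
structure SWCode (X Y : Type) where
  enc : X → List Bool
  dec : List Bool → Y → X
  prefixFree : ∀ x x', (enc x) <+: (enc x') → enc x = enc x'

namespace SWCode

variable {X Y : Type}

/-- error probability `Pr{ψ(φ(X),Y) ≠ X}` -/
def err (C : SWCode X Y) (P : JointPMF X Y) : ℝ :=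
  P.prob {z | C.dec (C.enc z.1) z.2 ≠ z.1}

/-- codeword length `ℓ(x)` -/
def len (C : SWCode X Y) (x : X) : ℕ := (C.enc x).length

/-- average codeword length `E[ℓ(X)]` -/
def avgLen (C : SWCode X Y) (P : JointPMF X Y) : ℝ :=
  ∑' x : X, P.pX x * ((C.enc x).length : ℝ)

end SWCode

/-- A general correlated source: for each blocklength `n`, a joint pmf on `𝒳ⁿ × 𝒴ⁿ`. -/
abbrev Source (X Y : Type) : Type := (n : ℕ) → JointPMF (Fin n → X) (Fin n → Y)

section Sources

variable {X Y : Type}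

/-- normalized conditional self-information `Zₙ = (1/n) log₂(1/P_{Xⁿ|Yⁿ})` -/
def nInfo (S : Source X Y) (n : ℕ) (z : (Fin n → X) × (Fin n → Y)) : ℝ :=
  (1/(n:ℝ)) * (S n).iXY z.1 z.2

/-- uniform integrability: `lim_{u→∞} sup_n E[Zₙ·1{Zₙ ≥ u}] = 0` -/
def UniformlyIntegrable (S : Source X Y) : Prop :=
  ∀ δ > (0:ℝ), ∃ u₀ : ℝ, ∀ u ≥ u₀, ∀ n : ℕ,
    (∑' z : (Fin n → X) × (Fin n → Y),
      {z | u ≤ nInfo S n z}.indicator (fun z => (S n).p z.1 z.2 * nInfo S n z) z) ≤ δ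

/-- spectral conditional sup-entropy rate `H̄(X|Y) = p-limsup Zₙ` -/
def specCondSup (S : Source X Y) : ℝ :=
  sInf {α : ℝ | Tendsto (fun n : ℕ => (S n).prob {z | α < nInfo S n z}) atTop (𝓝 0)}

/-- spectral conditional inf-entropy rate `H̲(X|Y) = p-liminf Zₙ` -/
def specCondInf (S : Source X Y) : ℝ :=
  sSup {β : ℝ | Tendsto (fun n : ℕ => (S n).prob {z | nInfo S n z < β}) atTop (𝓝 0)}

/-- spectral inf-divergence rate `D̲(X₁‖X₂)` between the marginal processes -/
def specInfDiv (S1 S2 : Source X Y) : ℝ :=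
  sSup {β : ℝ | Tendsto (fun n : ℕ =>
    (S1 n).probX {x | (1/(n:ℝ)) * Real.logb 2 ((S1 n).pX x / (S2 n).pX x) < β})
    atTop (𝓝 0)}

/-- optimal rate achievable by ε-coding with common side-information -/
def RcomEps (S : Source X Y) (ε : ℝ) : ℝ :=
  sInf {R : ℝ | ∃ C : (n : ℕ) → CSICode (Fin n → X) (Fin n → Y),
    limsup (fun n : ℕ => (C n).err (S n)) atTop ≤ ε ∧
    limsup (fun n : ℕ => (1/(n:ℝ)) * (C n).avgLen (S n)) atTop ≤ R}

/-- optimal rate achievable by ε-Slepian-Wolf coding -/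
def RSWeps (S : Source X Y) (ε : ℝ) : ℝ :=
  sInf {R : ℝ | ∃ C : (n : ℕ) → SWCode (Fin n → X) (Fin n → Y),
    limsup (fun n : ℕ => (C n).err (S n)) atTop ≤ ε ∧
    limsup (fun n : ℕ => (1/(n:ℝ)) * (C n).avgLen (S n)) atTop ≤ R}

/-- optimal rate achievable by weakly lossless Slepian-Wolf coding -/
def RSW (S : Source X Y) : ℝ :=
  sInf {R : ℝ | ∃ C : (n : ℕ) → SWCode (Fin n → X) (Fin n → Y),
    Tendsto (fun n : ℕ => (C n).err (S n)) atTop (𝓝 0) ∧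
    limsup (fun n : ℕ => (1/(n:ℝ)) * (C n).avgLen (S n)) atTop ≤ R}

/-- `H̄_s(X|Y) = lim_{ε↓0} limsup_n (1/n) H̄_s^ε(Xⁿ|Yⁿ)`. Since the inner quantity is
nonincreasing in `ε`, the right limit at `0` equals the supremum over `ε > 0`. -/
def Hs (S : Source X Y) : ℝ :=
  ⨆ ε ∈ Set.Ioi (0:ℝ), limsup (fun n : ℕ => (1/(n:ℝ)) * (S n).HsEps ε) atTop

/-- `(X,Y)` is the mixture of `(X₁,Y₁)` and `(X₂,Y₂)` with weights `α₁, α₂`. -/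
def IsMixture2 (S S1 S2 : Source X Y) (α1 α2 : ℝ) : Prop :=
  ∀ n x y, (S n).p x y = α1 * (S1 n).p x y + α2 * (S2 n).p x y

end Sources

open Real

theorem Real.logb_two_div_nonneg {a b : ℝ} (ha : 0 ≤ a) (hab : a ≤ b) :
    0 ≤ logb 2 (b / a) := by
  rcases ha.eq_or_lt with rfl | ha
  · simp
  · exact logb_nonneg one_lt_two ((one_le_div ha).2 hab)

theorem Real.mul_logb_two_div_le {a b : ℝ} (ha : 0 ≤ a) (hb : 0 ≤ b) :
    a * logb 2 (b / a) ≤ b := by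
  rcases ha.eq_or_lt with rfl | ha
  · simpa using hb
  rcases hb.eq_or_lt with rfl | hb
  · simp
  have hlog2 : 1 / 2 < log 2 := by linarith [log_two_gt_d9]
  have hsplit : log (b / a) = log (b / (2 * a)) + log 2 := by
    rw [← log_mul (by positivity) two_ne_zero]
    congr 1
    field_simp
  have hle := log_le_sub_one_of_pos (show 0 < b / (2 * a) by positivity)
  have hnat : a * log (b / a) ≤ b / 2 := by
    rw [hsplit]
    calc a * (log (b / (2 * a)) + log 2) ≤ a * (b / (2 * a) - 1 + log 2) := by gcongr
      _ = b / 2 - a * (1 - log 2) := by field_simp; ring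
      _ ≤ b / 2 := by nlinarith [log_two_lt_d9]
  rw [logb, ← mul_div_assoc, div_le_iff₀ (log_pos one_lt_two)]
  nlinarith

theorem hasSum_iff_hasSum_fiber_snd {α β : Type*} {f : α × β → ℝ} (hf : 0 ≤ f)
    {g : β → ℝ} (hfib : ∀ b, HasSum (fun a => f (a, b)) (g b)) {s : ℝ} : HasSum f s ↔ HasSum g s := by
  rw [← (Equiv.prodComm β α).hasSum_iff]
  refine ⟨fun h => h.prod_fiberwise hfib, fun hg => ?_⟩
  have hsum : Summable (f ∘ Equiv.prodComm β α) :=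
    (summable_prod_of_nonneg (f := f ∘ Equiv.prodComm β α) fun _ => hf _).2
      ⟨fun b => (hfib b).summable, hg.summable.congr fun b => (hfib b).tsum_eq.symm⟩
  rw [hg.unique (hsum.hasSum.prod_fiberwise hfib)]
  exact hsum.hasSum

theorem Real.sInf_sub_le_sInf_of_le_add {α : Type*} {q : α → Prop} {f g : α → ℝ}
    {m c : ℝ} (hq : ∃ a, q a) (hm : ∀ a, q a → m ≤ f a) (hfg : ∀ a, q a → f a ≤ g a + c) :
    sInf {v | ∃ a, q a ∧ v = f a} - c ≤ sInf {v | ∃ a, q a ∧ v = g a} := by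
  obtain ⟨a₀, ha₀⟩ := hq
  refine le_csInf ⟨g a₀, a₀, ha₀, rfl⟩ ?_
  rintro _ ⟨a, ha, rfl⟩
  have : sInf {v | ∃ a, q a ∧ v = f a} ≤ f a :=
    csInf_le ⟨m, by rintro _ ⟨a, ha, rfl⟩; exact hm a ha⟩ ⟨a, ha, rfl⟩
  linarith [hfg a ha]

namespace JointPMF

variable {X Y : Type} (P : JointPMF X Y) (A : Set (X × Y))

/-- `P_A(y) = P_{XY}(A ∩ {Y = y})`. -/
def pYOn (y : Y) : ℝ := ∑' x, A.indicator (fun z => P.p z.1 z.2) (x, y)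

/-- `P_{XY}(x,y) log₂ (1 / P(A | Y = y))` on `A`. -/
def infoLoss : X × Y → ℝ :=
  A.indicator fun z => P.p z.1 z.2 * logb 2 (P.pY z.2 / P.pYOn A z.2)

theorem summable_p : Summable fun z : X × Y => P.p z.1 z.2 := P.hasSum_one.summable

theorem hasSum_p_fiber (y : Y) : HasSum (fun x => P.p x y) (P.pY y) :=
  (P.summable_p.comp_injective (i := fun x => (x, y)) fun _ _ h => (Prod.ext_iff.1 h).1).hasSum

theorem hasSum_pY : HasSum P.pY 1 :=
  (hasSum_iff_hasSum_fiber_snd (fun z => P.nonneg z.1 z.2) P.hasSum_p_fiber).1 P.hasSum_one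

theorem hasSum_prob : HasSum (A.indicator fun z => P.p z.1 z.2) (P.prob A) :=
  (P.summable_p.indicator A).hasSum

theorem prob_le_one : P.prob A ≤ 1 :=
  hasSum_le (fun _ => Set.indicator_le_self' (fun z _ => P.nonneg z.1 z.2) _)
    (P.hasSum_prob A) P.hasSum_one

theorem prob_univ : P.prob Set.univ = 1 := by
  rw [prob, Set.indicator_univ, P.hasSum_one.tsum_eq]

theorem hasSum_pYOn_fiber (y : Y) :
    HasSum (fun x => A.indicator (fun z => P.p z.1 z.2) (x, y)) (P.pYOn A y) :=
  ((P.summable_p.indicator A).comp_injective (i := fun x => (x, y))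
    fun _ _ h => (Prod.ext_iff.1 h).1).hasSum

theorem pYOn_le_pY (y : Y) : P.pYOn A y ≤ P.pY y :=
  hasSum_le (fun _ => Set.indicator_le_self' (fun z _ => P.nonneg z.1 z.2) _)
    (P.hasSum_pYOn_fiber A y) (P.hasSum_p_fiber y)

theorem pYOn_nonneg (y : Y) : 0 ≤ P.pYOn A y :=
  tsum_nonneg fun _ => Set.indicator_nonneg (fun z _ => P.nonneg z.1 z.2) _

theorem p_le_pYOn {x : X} {y : Y} (hxy : (x, y) ∈ A) : P.p x y ≤ P.pYOn A y := by
  simpa [Set.indicator_of_mem hxy] using le_hasSum (P.hasSum_pYOn_fiber A y) x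
    fun _ _ => Set.indicator_nonneg (fun z _ => P.nonneg z.1 z.2) _

theorem QAY_eq (y : Y) : P.QAY A y = P.pYOn A y / P.prob A :=
  ((P.hasSum_pYOn_fiber A y).div_const _).tsum_eq

theorem iXY_nonneg (x : X) (y : Y) : 0 ≤ P.iXY x y := by
  rw [iXY, condXY, one_div_div]
  exact logb_two_div_nonneg (P.nonneg x y)
    (le_hasSum (P.hasSum_p_fiber y) x fun _ _ => P.nonneg _ _)

theorem infoSum_nonneg : 0 ≤ P.infoSum A :=
  tsum_nonneg <| Set.indicator_nonneg fun z _ =>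
    mul_nonneg (P.nonneg z.1 z.2) (P.iXY_nonneg z.1 z.2)

theorem infoLoss_nonneg : 0 ≤ P.infoLoss A :=
  Set.indicator_nonneg fun z _ =>
    mul_nonneg (P.nonneg z.1 z.2) (logb_two_div_nonneg (P.pYOn_nonneg A z.2) (P.pYOn_le_pY A z.2))

theorem hasSum_infoLoss_fiber (y : Y) : HasSum (fun x => P.infoLoss A (x, y))
    (P.pYOn A y * logb 2 (P.pY y / P.pYOn A y)) := by
  refine HasSum.congr_fun ((P.hasSum_pYOn_fiber A y).mul_right _) fun x => ?_
  by_cases hxy : (x, y) ∈ A <;> simp [infoLoss, hxy]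

theorem exists_hasSum_infoLoss_le_one : ∃ d ≤ 1, HasSum (P.infoLoss A) d := by
  set F : Y → ℝ := fun y => P.pYOn A y * logb 2 (P.pY y / P.pYOn A y)
  have hF_le : ∀ y, F y ≤ P.pY y := fun y =>
    mul_logb_two_div_le (P.pYOn_nonneg A y) ((P.margY_pos y).le)
  have hF_nonneg : 0 ≤ F := fun y =>
    HasSum.nonneg (fun _ => P.infoLoss_nonneg A _) (P.hasSum_infoLoss_fiber A y)
  have hF : Summable F := Summable.of_nonneg_of_le hF_nonneg hF_le P.hasSum_pY.summable
  exact ⟨∑' y, F y, hasSum_le hF_le hF.hasSum P.hasSum_pY,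
    (hasSum_iff_hasSum_fiber_snd (P.infoLoss_nonneg A) (P.hasSum_infoLoss_fiber A)).2 hF.hasSum⟩

theorem indicator_info_eq (hA : 0 < P.prob A) (z : X × Y) :
    A.indicator (fun z => P.p z.1 z.2 * P.iXY z.1 z.2) z =
      P.prob A * A.indicator (fun z => P.QA A z * logb 2 (P.QAY A z.2 / P.QA A z)) z +
        P.infoLoss A z := by
  by_cases hz : z ∈ A
  swap
  · simp [infoLoss, hz]
  obtain ⟨x, y⟩ := z
  simp only [infoLoss, QA, QAY_eq, iXY, condXY, Set.indicator_of_mem hz, one_div_div]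
  rcases (P.nonneg x y).eq_or_lt with hp | hp
  · simp [← hp]
  have hpA : 0 < P.pYOn A y := hp.trans_le (P.p_le_pYOn A hz)
  have hpY : 0 < P.pY y := P.margY_pos y
  rw [show P.pY y / P.p x y = P.pYOn A y / P.p x y * (P.pY y / P.pYOn A y) by field_simp,
    logb_mul (by positivity) (by positivity)]
  field_simp

/-- The junk value `0` of a divergent `tsum` is harmless: `P.infoSum A` and `P.HA A` diverge
together, because they differ by the summable `infoLoss`. -/
theorem prob_mul_HA_le_infoSum_le_add_one (hA : 0 < P.prob A) :
    P.prob A * P.HA A ≤ P.infoSum A ∧ P.infoSum A ≤ P.prob A * P.HA A + 1 := by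
  set h : X × Y → ℝ := A.indicator fun z => P.QA A z * logb 2 (P.QAY A z.2 / P.QA A z)
  have hsplit : (A.indicator fun z => P.p z.1 z.2 * P.iXY z.1 z.2) =
      fun z => P.prob A * h z + P.infoLoss A z := funext (P.indicator_info_eq A hA)
  obtain ⟨d, hd_le, hd⟩ := P.exists_hasSum_infoLoss_le_one A
  have hd_nonneg : 0 ≤ d := hd.nonneg (P.infoLoss_nonneg A)
  by_cases hh : Summable h
  · have hinfo : P.infoSum A = P.prob A * P.HA A + d := by
      rw [infoSum, hsplit, ((hh.hasSum.mul_left _).add hd).tsum_eq]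
      rfl
    constructor <;> linarith
  · have hinfo : ¬ Summable (A.indicator fun z => P.p z.1 z.2 * P.iXY z.1 z.2) := fun hg => by
      refine hh ((summable_mul_left_iff hA.ne').1 ?_)
      simpa [hsplit] using hg.sub hd.summable
    rw [infoSum, HA, tsum_eq_zero_of_not_summable hinfo, tsum_eq_zero_of_not_summable hh]
    norm_num

end JointPMF

theorem He_tHe_relation_general {X Y : Type}
    (P : JointPMF X Y) (ε : ℝ) (hε : ε ∈ Set.Ico (0:ℝ) 1) :
    (P.tHe ε - 1 ≤ P.He ε ∧ P.He ε ≤ (1/(1-ε)) * P.tHe ε) ∧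
    (∀ A : Set (X × Y), 1 - ε ≤ P.prob A →
      P.infoSum A - 1 ≤ P.prob A * P.HA A ∧
      P.prob A * P.HA A ≤ (1 / P.prob A) * P.infoSum A) := by
  obtain ⟨hε₀, hε₁⟩ := hε
  have hpos {A : Set (X × Y)} (hA : 1 - ε ≤ P.prob A) : 0 < P.prob A := by linarith
  have hfeasible : ∃ A, 1 - ε ≤ P.prob A := ⟨Set.univ, by rw [P.prob_univ]; linarith⟩
  have hbounds {A} (hA : 1 - ε ≤ P.prob A) := P.prob_mul_HA_le_infoSum_le_add_one A (hpos hA)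
  have htHe_nonneg : 0 ≤ P.tHe ε :=
    Real.sInf_nonneg fun _ ⟨A, _, hv⟩ => hv ▸ P.infoSum_nonneg A
  have hHe_le : P.He ε ≤ P.tHe ε :=
    (sub_zero (P.He ε)).symm.trans_le <| Real.sInf_sub_le_sInf_of_le_add hfeasible (m := -1)
      (fun A hA => by linarith [P.infoSum_nonneg A, (hbounds hA).2])
      (fun A hA => (add_zero (P.infoSum A)).symm ▸ (hbounds hA).1)
  refine ⟨⟨Real.sInf_sub_le_sInf_of_le_add hfeasible (fun A _ => P.infoSum_nonneg A)
      (fun A hA => (hbounds hA).2), ?_⟩, fun A hA => ⟨by linarith [(hbounds hA).2], ?_⟩⟩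
  · exact hHe_le.trans
      (le_mul_of_one_le_left htHe_nonneg (one_le_one_div (by linarith) (by linarith)))
  · exact (hbounds hA).1.trans
      (le_mul_of_one_le_left (P.infoSum_nonneg A) (one_le_one_div (hpos hA) (P.prob_le_one A)))

/-- Relation between `He^ε` and `tHe^ε`. -/
theorem He_tHe_relation {X Y : Type} [Countable X] [Countable Y]
    (P : JointPMF X Y) (ε : ℝ) (hε : ε ∈ Set.Ico (0:ℝ) 1) :
    (P.tHe ε - 1 ≤ P.He ε ∧ P.He ε ≤ (1/(1-ε)) * P.tHe ε) ∧
    (∀ A : Set (X × Y), 1 - ε ≤ P.prob A →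
      P.infoSum A - 1 ≤ P.prob A * P.HA A ∧
      P.prob A * P.HA A ≤ (1 / P.prob A) * P.infoSum A) :=
  He_tHe_relation_general P ε hε
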